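/- Let r, s ∈ [0,1] and let h be a homeomorphism of the Cantor set Ω such that μ_s = μ_r ∘ h⁻¹. Then for every i ∈ ℕ, the set of values μ_r(C) over clopen subsets C of h⁻¹(A_i) is exactly the set of values s · P(s) where P ranges over partition polynomials. -/

import Mathlib

open MeasureTheory Polynomial

/-- `P` is a partition polynomial: `P(X) = ∑_{i=0}^n a_i X^i (1-X)^(n-i)` with
integers `0 ≤ a_i ≤ C(n,i)`. -/
def IsPartitionPolynomial (P : Polynomial ℤ) : Prop :=
  ∃ (n : ℕ) (a : ℕ → ℤ),
    (∀ i ≤ n, 0 ≤ a i ∧ a i ≤ (n.choose i : ℤ)) ∧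
    P = ∑ i ∈ Finset.range (n + 1), C (a i) * X ^ i * (1 - X) ^ (n - i)

/-- `μ` is the Bernoulli(`r`) product measure on the Cantor set `ℕ → Bool`:
every cylinder specifying the coordinates in a finite set `s` to agree with `e`
has measure `r^(#1s) * (1-r)^(#0s)`.  (This characterizes the infinite power of
the `(r, 1-r)` measure on `{0,1}` uniquely among Borel measures.) -/
def IsBernoulli (r : ℝ) (μ : Measure (ℕ → Bool)) : Prop :=
  ∀ (s : Finset ℕ) (e : ℕ → Bool),
    μ {x : ℕ → Bool | ∀ i ∈ s, x i = e i} =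
      ENNReal.ofReal (r ^ (s.filter fun i => e i = true).card *
        (1 - r) ^ (s.filter fun i => e i = false).card)

/-- The cylinder `A_i = {x ∈ Ω : x i = 1}`. -/
def cylinderOne (i : ℕ) : Set (ℕ → Bool) := {x : ℕ → Bool | x i = true}

/-!
A homeomorphism `h` with `ν = μ ∘ h⁻¹` matches clopen subsets `C` of `h⁻¹(A_i)` with clopen
subsets `D = h(C)` of `A_i`, and `μ C = ν D`; so only clopen subsets of `A_i` under the
Bernoulli(`s`) measure `ν` matter. Such a `D` depends on finitely many coordinates, say on `i`
and a set `G` of `n` further coordinates, so it is the disjoint union of the cylinders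
`{x_i = 1, x|_G = 1_B}` over a family `S` of subsets `B ⊆ G`, of measures
`s · s^|B| (1-s)^(n-|B|)`. Grouping the `B` by size gives `ν D = s P(s)` for the partition
polynomial with `a_j = #{B ∈ S : |B| = j} ≤ C(n, j)`; conversely every admissible `(a_j)` is
realised by a family of `a_j` subsets of size `j` of `n` fresh coordinates.
-/

open Finset

noncomputable def partitionPolynomial (n : ℕ) (a : ℕ → ℤ) : ℤ[X] :=
  ∑ j ∈ range (n + 1), C (a j) * X ^ j * (1 - X) ^ (n - j)

lemma aeval_partitionPolynomial (s : ℝ) (n : ℕ) (a : ℕ → ℤ) :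
    aeval s (partitionPolynomial n a) =
      ∑ j ∈ range (n + 1), (a j : ℝ) * s ^ j * (1 - s) ^ (n - j) := by
  simp [partitionPolynomial]

section SetFamily

variable {α : Type*} {G : Finset α} {S : Finset (Finset α)}

lemma card_filter_card_eq_le_choose (hS : S ⊆ G.powerset) (j : ℕ) :
    #{B ∈ S | #B = j} ≤ (#G).choose j := by
  rw [← card_powersetCard]
  refine card_le_card fun B hB => ?_
  obtain ⟨hBS, rfl⟩ := mem_filter.mp hB
  exact mem_powersetCard.mpr ⟨mem_powerset.mp (hS hBS), rfl⟩

lemma isPartitionPolynomial_partitionPolynomial_card (hS : S ⊆ G.powerset) :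
    IsPartitionPolynomial (partitionPolynomial #G fun j => #{B ∈ S | #B = j}) :=
  ⟨#G, _, fun j _ =>
    ⟨by positivity, by exact_mod_cast card_filter_card_eq_le_choose hS j⟩, rfl⟩

lemma sum_pow_mul_pow_eq_aeval_partitionPolynomial (s : ℝ) (hS : S ⊆ G.powerset) :
    ∑ B ∈ S, s ^ #B * (1 - s) ^ (#G - #B) =
      aeval s (partitionPolynomial #G fun j => #{B ∈ S | #B = j}) := by
  have hmaps : ∀ B ∈ S, #B ∈ range (#G + 1) := fun B hB =>
    mem_range_succ_iff.mpr (card_le_card (mem_powerset.mp (hS hB)))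
  rw [aeval_partitionPolynomial, ← sum_fiberwise_of_maps_to hmaps]
  refine sum_congr rfl fun j _ => ?_
  rw [sum_congr rfl fun B hB => by rw [(mem_filter.mp hB).2], sum_const, nsmul_eq_mul]
  push_cast
  ring

lemma exists_subset_powerset_card_filter_eq {a : ℕ → ℕ}
    (ha : ∀ j ≤ #G, a j ≤ (#G).choose j) :
    ∃ S ⊆ G.powerset, ∀ j ≤ #G, #{B ∈ S | #B = j} = a j := by
  classical
  choose! U hUG hUa using fun j (hj : j ≤ #G) =>
    exists_subset_card_eq ((card_powersetCard j G).symm ▸ ha j hj)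
  refine ⟨(range (#G + 1)).biUnion U, fun B hB => ?_, fun j hj => ?_⟩
  · obtain ⟨j, hj, hB⟩ := mem_biUnion.mp hB
    exact mem_powerset.mpr (mem_powersetCard.mp (hUG j (mem_range_succ_iff.mp hj) hB)).1
  · have hcard : ∀ k ≤ #G, ∀ B ∈ U k, #B = k := fun k hk B hB =>
      (mem_powersetCard.mp (hUG k hk hB)).2
    rw [← hUa j hj]
    congr 1
    ext B
    simp only [mem_filter, mem_biUnion, mem_range_succ_iff]
    constructor
    · rintro ⟨⟨k, hk, hB⟩, rfl⟩
      rwa [hcard k hk B hB]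
    · exact fun hB => ⟨⟨j, hj, hB⟩, hcard j hj B hB⟩

end SetFamily

-- A compact open set is a finite union of basic open boxes.
lemma IsOpen.exists_finset_dependsOn_mem {ι : Type*} {π : ι → Type*}
    [∀ i, TopologicalSpace (π i)] {D : Set (∀ i, π i)} (hD : IsOpen D) (hDc : IsCompact D) :
    ∃ F : Finset ι, DependsOn (· ∈ D) F := by
  classical
  choose! I u hu hIuD using isOpen_pi_iff.mp hD
  obtain ⟨t, htD, hcover⟩ := hDc.elim_nhds_subcover (fun x => (I x : Set ι).pi (u x))
    fun x hx => (isOpen_set_pi (I x).finite_toSet fun i hi => (hu x hx i hi).1).mem_nhds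
      fun i hi => (hu x hx i hi).2
  have key : ∀ x y : ∀ i, π i, (∀ i ∈ t.biUnion I, x i = y i) → x ∈ D → y ∈ D := by
    intro x y hxy hx
    obtain ⟨z, hzt, hxz⟩ := Set.mem_iUnion₂.mp (hcover hx)
    refine hIuD z (htD z hzt) fun i hi => ?_
    rw [← hxy i (mem_biUnion.mpr ⟨z, hzt, hi⟩)]
    exact hxz i hi
  exact ⟨t.biUnion I, fun x y hxy =>
    propext ⟨key x y fun i hi => hxy i hi, key y x fun i hi => (hxy i hi).symm⟩⟩

def patternCylinder (F T : Finset ℕ) : Set (ℕ → Bool) :=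
  {x | ∀ j ∈ F, x j = decide (j ∈ T)}

lemma isClopen_patternCylinder (F T : Finset ℕ) : IsClopen (patternCylinder F T) := by
  simp only [patternCylinder, Set.ofPred_forall]
  exact isClopen_biInter_finset fun j _ =>
    (isClopen_discrete {decide (j ∈ T)}).preimage (continuous_apply j)

lemma patternCylinder_insert_subset_cylinderOne (i : ℕ) (G B : Finset ℕ) :
    patternCylinder (insert i G) (insert i B) ⊆ cylinderOne i := fun x hx => by
  simpa [cylinderOne] using hx i (mem_insert_self i G)

lemma disjoint_patternCylinder_insert {i : ℕ} {G B B' : Finset ℕ} (hiG : i ∉ G) (hB : B ⊆ G)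
    (hB' : B' ⊆ G) (hne : B ≠ B') :
    Disjoint (patternCylinder (insert i G) (insert i B))
      (patternCylinder (insert i G) (insert i B')) := by
  refine Set.disjoint_left.mpr fun x hx hx' => hne ?_
  have hmem : ∀ j ∈ G, j ∈ B ↔ j ∈ B' := fun j hj => by
    have hji : j ≠ i := ne_of_mem_of_not_mem hj hiG
    simpa [hji] using (hx j (mem_insert_of_mem hj)).symm.trans (hx' j (mem_insert_of_mem hj))
  ext j
  exact ⟨fun h => (hmem j (hB h)).mp h, fun h => (hmem j (hB' h)).mpr h⟩

lemma exists_eq_biUnion_patternCylinder_insert {i : ℕ} {G : Finset ℕ} {D : Set (ℕ → Bool)}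
    (hDi : D ⊆ cylinderOne i) (hD : DependsOn (· ∈ D) (insert i G : Finset ℕ)) :
    ∃ S ⊆ G.powerset, D = ⋃ B ∈ S, patternCylinder (insert i G) (insert i B) := by
  classical
  refine ⟨{B ∈ G.powerset | patternCylinder (insert i G) (insert i B) ⊆ D}, filter_subset _ _,
    subset_antisymm (fun x hx => ?_) (Set.iUnion₂_subset fun B hB => (mem_filter.mp hB).2)⟩
  set T := {j ∈ insert i G | x j = true}
  have hiT : i ∈ T := mem_filter.mpr ⟨mem_insert_self i G, hDi hx⟩
  have hxT : x ∈ patternCylinder (insert i G) T := fun j hj => by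
    cases hxj : x j <;> simp [T, hj, hxj]
  refine Set.mem_biUnion (x := T.erase i) (mem_filter.mpr ⟨?_, ?_⟩) ?_
  · exact mem_powerset.mpr fun j hj =>
      (mem_insert.mp (mem_filter.mp (mem_of_mem_erase hj)).1).resolve_left (ne_of_mem_erase hj)
  · rw [insert_erase hiT]
    intro y hy
    exact cast (hD fun j hj => (hxT j hj).trans (hy j hj).symm) hx
  · rwa [insert_erase hiT]

section Bernoulli

variable {s : ℝ} {ν : Measure (ℕ → Bool)}

lemma IsBernoulli.measure_patternCylinder_insert (hν : IsBernoulli s ν) {i : ℕ} {G B : Finset ℕ}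
    (hiG : i ∉ G) (hB : B ⊆ G) :
    ν (patternCylinder (insert i G) (insert i B)) =
      ENNReal.ofReal (s * (s ^ #B * (1 - s) ^ (#G - #B))) := by
  have htrue : {j ∈ insert i G | decide (j ∈ insert i B) = true} = insert i B := by
    ext j; simp only [mem_filter, decide_eq_true_eq, mem_insert]; grind
  have hfalse : {j ∈ insert i G | decide (j ∈ insert i B) = false} = G \ B := by
    ext j; simp only [mem_filter, decide_eq_false_iff_not, mem_insert, mem_sdiff]; grind
  rw [patternCylinder, hν, htrue, hfalse, card_insert_of_notMem fun hi => hiG (hB hi),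
    card_sdiff_of_subset hB, pow_succ]
  ring_nf

lemma IsBernoulli.measure_biUnion_patternCylinder_insert (hν : IsBernoulli s ν)
    (hs : s ∈ Set.Icc (0 : ℝ) 1) {i : ℕ} {G : Finset ℕ} (hiG : i ∉ G)
    {S : Finset (Finset ℕ)} (hS : S ⊆ G.powerset) :
    ν (⋃ B ∈ S, patternCylinder (insert i G) (insert i B)) =
      ENNReal.ofReal (s * ∑ B ∈ S, s ^ #B * (1 - s) ^ (#G - #B)) := by
  have hsub : ∀ B ∈ S, B ⊆ G := fun B hB => mem_powerset.mp (hS hB)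
  rw [measure_biUnion_finset
      (fun B hB B' hB' => disjoint_patternCylinder_insert hiG (hsub B hB) (hsub B' hB'))
      fun B _ => (isClopen_patternCylinder _ _).isOpen.measurableSet, mul_sum,
    ENNReal.ofReal_sum_of_nonneg fun B _ =>
      mul_nonneg hs.1 (mul_nonneg (pow_nonneg hs.1 _) (pow_nonneg (sub_nonneg.mpr hs.2) _))]
  exact sum_congr rfl fun B hB => hν.measure_patternCylinder_insert hiG (hsub B hB)

lemma IsBernoulli.exists_measure_eq_of_isClopen_subset (hν : IsBernoulli s ν)
    (hs : s ∈ Set.Icc (0 : ℝ) 1) {i : ℕ} {D : Set (ℕ → Bool)} (hD : IsClopen D)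
    (hDi : D ⊆ cylinderOne i) :
    ∃ P : ℤ[X], IsPartitionPolynomial P ∧ ν D = ENNReal.ofReal (s * aeval s P) := by
  obtain ⟨F, hF⟩ := hD.isOpen.exists_finset_dependsOn_mem hD.isClosed.isCompact
  have hdep : DependsOn (· ∈ D) (insert i (F.erase i) : Finset ℕ) :=
    hF.mono (coe_subset.mpr (insert_erase_subset i F))
  obtain ⟨S, hS, rfl⟩ := exists_eq_biUnion_patternCylinder_insert hDi hdep
  refine ⟨_, isPartitionPolynomial_partitionPolynomial_card hS, ?_⟩
  rw [hν.measure_biUnion_patternCylinder_insert hs (notMem_erase i F) hS,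
    sum_pow_mul_pow_eq_aeval_partitionPolynomial s hS]

lemma IsBernoulli.exists_isClopen_subset_measure_eq (hν : IsBernoulli s ν)
    (hs : s ∈ Set.Icc (0 : ℝ) 1) (i : ℕ) {P : ℤ[X]} (hP : IsPartitionPolynomial P) :
    ∃ D : Set (ℕ → Bool), IsClopen D ∧ D ⊆ cylinderOne i ∧
      ν D = ENNReal.ofReal (s * aeval s P) := by
  obtain ⟨n, a, ha, rfl⟩ := hP
  set G := Ioc i (i + n)
  have hG : #G = n := by simp [G]
  obtain ⟨S, hS, hSa⟩ :=
    exists_subset_powerset_card_filter_eq (G := G) (a := fun j => (a j).toNat) fun j hj => by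
      rw [hG] at hj ⊢
      have := (ha j hj).2
      omega
  have hcoeff :
      partitionPolynomial #G (fun j => #{B ∈ S | #B = j}) = partitionPolynomial n a := by
    rw [hG] at hSa ⊢
    refine sum_congr rfl fun j hj => ?_
    have hjn := mem_range_succ_iff.mp hj
    simp only [hSa j hjn, Int.toNat_of_nonneg (ha j hjn).1]
  refine ⟨⋃ B ∈ S, patternCylinder (insert i G) (insert i B),
    isClopen_biUnion_finset fun B _ => isClopen_patternCylinder _ _,
    Set.iUnion₂_subset fun B _ => patternCylinder_insert_subset_cylinderOne i G B, ?_⟩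
  rw [hν.measure_biUnion_patternCylinder_insert hs (by simp [G]) hS,
    sum_pow_mul_pow_eq_aeval_partitionPolynomial s hS, hcoeff]
  rfl

end Bernoulli

theorem measures_of_clopen_subsets_of_preimage_cylinder_general
    (s : ℝ) (hs : s ∈ Set.Icc (0 : ℝ) 1)
    (μ ν : Measure (ℕ → Bool)) (hν : IsBernoulli s ν)
    (h : (ℕ → Bool) ≃ₜ (ℕ → Bool)) (hh : ν = μ.map h) (i : ℕ) :
    {t : ENNReal | ∃ C : Set (ℕ → Bool), IsClopen C ∧ C ⊆ (⇑h) ⁻¹' cylinderOne i ∧ μ C = t} =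
      {t : ENNReal | ∃ P : Polynomial ℤ, IsPartitionPolynomial P ∧
        t = ENNReal.ofReal (s * aeval s P)} := by
  have hμν : ∀ D, IsClopen D → μ (h ⁻¹' D) = ν D := fun D hD => by
    rw [hh, Measure.map_apply h.measurable hD.isOpen.measurableSet]
  ext t
  constructor
  · rintro ⟨C, hC, hCi, rfl⟩
    have hD : IsClopen (h.symm ⁻¹' C) := hC.preimage h.symm.continuous
    obtain ⟨P, hP, hPν⟩ := hν.exists_measure_eq_of_isClopen_subset hs hD
      fun x hx => by simpa using hCi hx
    refine ⟨P, hP, ?_⟩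
    rw [← hPν, ← hμν _ hD, h.preimage_symm, h.preimage_image]
  · rintro ⟨P, hP, rfl⟩
    obtain ⟨D, hD, hDi, hDν⟩ := hν.exists_isClopen_subset_measure_eq hs i hP
    exact ⟨h ⁻¹' D, hD.preimage h.continuous, Set.preimage_mono hDi, by rw [hμν D hD, hDν]⟩

/-- if `h` is a homeomorphism of the Cantor set with
`μ_s = μ_r ∘ h⁻¹`, then the values `μ_r(C)` over clopen subsets `C` of
`h⁻¹(A_i)` are exactly the values `s * P(s)` for `P` a partition polynomial. -/
theorem measures_of_clopen_subsets_of_preimage_cylinder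
    (r s : ℝ) (hr : r ∈ Set.Icc (0 : ℝ) 1) (hs : s ∈ Set.Icc (0 : ℝ) 1)
    (μ ν : Measure (ℕ → Bool)) (hμ : IsBernoulli r μ) (hν : IsBernoulli s ν)
    (h : (ℕ → Bool) ≃ₜ (ℕ → Bool)) (hh : ν = μ.map h) (i : ℕ) :
    {t : ENNReal | ∃ C : Set (ℕ → Bool), IsClopen C ∧ C ⊆ (⇑h) ⁻¹' cylinderOne i ∧ μ C = t} =
      {t : ENNReal | ∃ P : Polynomial ℤ, IsPartitionPolynomial P ∧
        t = ENNReal.ofReal (s * aeval s P)} :=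
  measures_of_clopen_subsets_of_preimage_cylinder_general s hs μ ν hν h hh i
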